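/- Let $K \geq 1$ and let real numbers $q$, $q_r$ ($1 \le r \le K$), and $q_{ut}$ ($1 \le u,t \le K$) satisfy $q_{ut} = q_{tu}$ for all $u,t$. Suppose that for every probability vector $(p_1,\ldots,p_K)$ in the $K$-simplex and every $s \in \{1,\ldots,K\}$, $q \cdot p_s + \sum_{r=1}^{K} q_r p_s(\delta_{sr} - p_r) + \sum_{u,t=1}^{K} q_{ut} p_s [(\delta_{su} - p_u)(\delta_{st} - p_t) - p_u(\delta_{ut} - p_t)] = 0$, where $\delta$ is the Kronecker delta. Then $q = 0$, $q_r = q_s$ for all $1 \le r,s \le K$, and $2q_{uv} = q_{uu} + q_{vv}$ for all $1 \le u,v \le K$. -/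

import Mathlib

/-! The left-hand side factors as `p s` times an affine-quadratic expression in `p`
(`softmaxDerivComb_eq`). On the edge `(1 - y) e_a + y e_b` of the simplex the factor `p a` is
positive for `y < 1`, so the second factor
`q + y (q_a - q_b) + y (2y - 1) (Q_aa - Q_ab - Q_ba + Q_bb)` vanishes there.
Taking `y = 0`, `1/2` and `2/3` gives the three claims. -/

/-- Kronecker delta. -/
noncomputable def kdelta {K : ℕ} (s r : Fin K) : ℝ := if s = r then 1 else 0

open Finset

variable {K : ℕ}

theorem sum_kdelta_mul (s : Fin K) (f : Fin K → ℝ) : ∑ t, kdelta s t * f t = f s := by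
  simp [kdelta]

/-- The weights of `qr` and `Q` are the first and second logit-derivatives of the softmax
weight `p s`. -/
noncomputable def softmaxDerivComb (q : ℝ) (qr : Fin K → ℝ) (Q : Fin K → Fin K → ℝ)
    (p : Fin K → ℝ) (s : Fin K) : ℝ :=
  q * p s
    + (∑ r, qr r * (p s * (kdelta s r - p r)))
    + (∑ u, ∑ t, Q u t * (p s *
        ((kdelta s u - p u) * (kdelta s t - p t) - p u * (kdelta u t - p t))))

theorem softmaxDerivComb_eq (q : ℝ) (qr : Fin K → ℝ) (Q : Fin K → Fin K → ℝ)
    (p : Fin K → ℝ) (s : Fin K) :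
    softmaxDerivComb q qr Q p s = p s * (q + qr s - ∑ r, qr r * p r + Q s s
      - ∑ t, Q s t * p t - ∑ t, Q t s * p t + 2 * ∑ u, (∑ t, Q u t * p t) * p u
      - ∑ u, Q u u * p u) := by
  have hlin : ∀ r, qr r * (p s * (kdelta s r - p r)) = p s * (kdelta s r * qr r - qr r * p r) :=
    fun r => by ring
  have hquad : ∀ u t, Q u t * (p s *
      ((kdelta s u - p u) * (kdelta s t - p t) - p u * (kdelta u t - p t)))
      = p s * (kdelta s u * (kdelta s t * Q u t) - kdelta s u * (Q u t * p t)
        - kdelta s t * (Q u t * p u) + 2 * (Q u t * p t * p u) - kdelta u t * (Q u t * p u)) :=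
    fun u t => by ring
  simp only [softmaxDerivComb, hlin, hquad, ← mul_sum, sum_sub_distrib, sum_add_distrib,
    sum_kdelta_mul, sum_mul]
  ring

noncomputable def edgePoint (a b : Fin K) (y : ℝ) (i : Fin K) : ℝ :=
  (1 - y) * kdelta a i + y * kdelta b i

theorem sum_mul_edgePoint (a b : Fin K) (y : ℝ) (f : Fin K → ℝ) :
    ∑ i, f i * edgePoint a b y i = (1 - y) * f a + y * f b := by
  simp [edgePoint, kdelta, mul_add, sum_add_distrib]
  ring

theorem sum_edgePoint (a b : Fin K) (y : ℝ) : ∑ i, edgePoint a b y i = 1 := by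
  simpa using sum_mul_edgePoint a b y 1

theorem edgePoint_nonneg (a b : Fin K) {y : ℝ} (hy0 : 0 ≤ y) (hy1 : y ≤ 1) (i : Fin K) :
    0 ≤ edgePoint a b y i := by
  unfold edgePoint kdelta
  split_ifs <;> linarith

theorem edgePoint_left_pos (a b : Fin K) {y : ℝ} (hy1 : y < 1) : 0 < edgePoint a b y a := by
  rw [edgePoint, kdelta, if_pos rfl]
  unfold kdelta
  split_ifs <;> linarith

theorem softmaxDerivComb_edgePoint (q : ℝ) (qr : Fin K → ℝ) (Q : Fin K → Fin K → ℝ)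
    (a b : Fin K) (y : ℝ) :
    softmaxDerivComb q qr Q (edgePoint a b y) a = edgePoint a b y a *
      (q + y * (qr a - qr b) + y * (2 * y - 1) * (Q a a - Q a b - Q b a + Q b b)) := by
  simp only [softmaxDerivComb_eq, sum_mul_edgePoint]
  congr 1
  ring

theorem edge_identity_of_softmaxDerivComb_eq_zero {q : ℝ} {qr : Fin K → ℝ}
    {Q : Fin K → Fin K → ℝ}
    (hvanish : ∀ p : Fin K → ℝ, (∀ i, 0 ≤ p i) → ∑ i, p i = 1 →
      ∀ s, softmaxDerivComb q qr Q p s = 0)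
    (a b : Fin K) {y : ℝ} (hy0 : 0 ≤ y) (hy1 : y < 1) :
    q + y * (qr a - qr b) + y * (2 * y - 1) * (Q a a - Q a b - Q b a + Q b b) = 0 := by
  have h := hvanish (edgePoint a b y) (edgePoint_nonneg a b hy0 hy1.le) (sum_edgePoint a b y) a
  rw [softmaxDerivComb_edgePoint] at h
  exact (mul_eq_zero.mp h).resolve_left (edgePoint_left_pos a b hy1).ne'

/-- Lemma A.1 (quadratic independency). -/
theorem quadratic_independency (K : ℕ) (hK : 1 ≤ K)
    (q : ℝ) (qr : Fin K → ℝ) (Q : Fin K → Fin K → ℝ)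
    (hsymm : ∀ u t : Fin K, Q u t = Q t u)
    (hid : ∀ p : Fin K → ℝ, (∀ i, 0 ≤ p i) → (∑ i, p i) = 1 →
      ∀ s : Fin K,
        q * p s
        + (∑ r, qr r * (p s * (kdelta s r - p r)))
        + (∑ u, ∑ t, Q u t * (p s *
            ((kdelta s u - p u) * (kdelta s t - p t) - p u * (kdelta u t - p t)))) = 0) :
    q = 0 ∧ (∀ r s : Fin K, qr r = qr s) ∧
      (∀ u v : Fin K, 2 * Q u v = Q u u + Q v v) := by
  have edge := edge_identity_of_softmaxDerivComb_eq_zero hid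
  have hq : q = 0 := by
    simpa using edge ⟨0, hK⟩ ⟨0, hK⟩ le_rfl one_pos
  have hqr : ∀ r s : Fin K, qr r = qr s := fun r s => by
    have h := edge r s (y := 1 / 2) (by norm_num) (by norm_num)
    linarith
  refine ⟨hq, hqr, fun u v => ?_⟩
  have h := edge u v (y := 2 / 3) (by norm_num) (by norm_num)
  linarith [hqr u v, hsymm u v]
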